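/- arXiv:0911.2345 — 3 statements merged into one kernel-verified Lean document; each statement's English description precedes it below -/
import Mathlib

section
/- If K₁ and K₂ are Cantor sets in ℝ with thicknesses satisfying τ(K₁)·τ(K₂) > 1, and the sets are interleaved (neither is contained in a gap of the other, nor in the unbounded complementary components of the other's convex hull), then K₁ ∩ K₂ ≠ ∅. -/
open Set

/-- The convex hull `I₀ = [inf K, sup K]` of a set `K ⊆ ℝ`. -/
noncomputable def cantorHull (K : Set ℝ) : Set ℝ := Set.Icc (sInf K) (sSup K)

/-- `U` is a gap of `K`: a (bounded) connected component of `I₀ \ K`. -/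
def IsGap (K U : Set ℝ) : Prop :=
  ∃ u ∈ cantorHull K \ K, U = connectedComponentIn (cantorHull K \ K) u

/-- A presentation of `K`: an injective enumeration `𝒰 : ℕ → Set ℝ` of all the gaps of `K`. -/
def IsPresentation (K : Set ℝ) (𝒰 : ℕ → Set ℝ) : Prop :=
  Function.Injective 𝒰 ∧ Set.range 𝒰 = {U | IsGap K U}

/-- The bridge at `u` relative to the gaps `𝒰 0, …, 𝒰 n`: the connected component of
`I₀ \ (𝒰 0 ∪ … ∪ 𝒰 n)` containing `u`. -/
noncomputable def bridge (K : Set ℝ) (𝒰 : ℕ → Set ℝ) (n : ℕ) (u : ℝ) : Set ℝ :=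
  connectedComponentIn (cantorHull K \ ⋃ i ∈ Finset.range (n + 1), 𝒰 i) u

/-- The Newhouse thickness of `K`: the sup over presentations `𝒰` of the inf over
boundary points `u` of gaps `𝒰 n` of the ratio `ℓ(bridge)/ℓ(gap)`. -/
noncomputable def thickness (K : Set ℝ) : ℝ :=
  ⨆ 𝒰 : {𝒰 : ℕ → Set ℝ // IsPresentation K 𝒰},
    ⨅ p : {p : ℕ × ℝ // p.2 ∈ frontier (𝒰.1 p.1)},
      Metric.diam (bridge K 𝒰.1 p.1.1 p.1.2) / Metric.diam (𝒰.1 p.1.1)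

/-- A Cantor set in the line: compact, perfect, totally disconnected and nonempty. -/
def IsCantorSet (K : Set ℝ) : Prop :=
  IsCompact K ∧ Perfect K ∧ IsTotallyDisconnected K ∧ K.Nonempty

/-- `K₁` and `K₂` are interleaved: neither is contained in a gap of the other,
nor in one of the two unbounded components of the complement of the other's convex hull. -/
def Interleaved (K₁ K₂ : Set ℝ) : Prop :=
  (¬ ∃ U, IsGap K₂ U ∧ K₁ ⊆ U) ∧ (¬ ∃ U, IsGap K₁ U ∧ K₂ ⊆ U) ∧
  ¬ (K₁ ⊆ {x | x < sInf K₂}) ∧ ¬ (K₁ ⊆ {x | sSup K₂ < x}) ∧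
  ¬ (K₂ ⊆ {x | x < sInf K₁}) ∧ ¬ (K₂ ⊆ {x | sSup K₁ < x})

/-! Suppose `K₁ ∩ K₂ = ∅` and choose presentations whose bridge-to-gap ratios are bounded below by
`s` and `t` with `s * t > 1`. Call a gap `(a, b)` of one set and a gap `(c, d)` of the other
linked if `a < c < b < d`; interleaving provides a linked pair. Since `s * t > 1`, either the
bridge of `K₂` at `c` is longer than `(a, b)`, or the bridge of `K₁` at `b` is longer than
`(c, d)`. In the first case `a` lies in a gap of `K₂` of larger index that is linked with
`(a, b)`; in the second `d` lies in a gap of `K₁` of larger index linked with `(c, d)`. So linked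
pairs have unbounded index sums, yet linked gaps are longer than the distance between `K₁` and
`K₂`, and only finitely many gaps are that long. -/

open Metric MeasureTheory Bornology Function

namespace Set.OrdConnected

variable {B : Set ℝ} {c d : ℝ}

lemma subset_Iic_of_disjoint_Ioo (hB : B.OrdConnected) (hc : c ∈ B) (hcd : c < d)
    (hdisj : Disjoint B (Ioo c d)) : B ⊆ Iic c := by
  intro y hy
  rw [mem_Iic]
  by_contra! hcy
  have hmid : (c + min d y) / 2 ∈ Ioo c d :=
    ⟨by linarith [lt_min hcd hcy], by linarith [min_le_left d y, lt_min hcd hcy]⟩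
  exact disjoint_left.mp hdisj (hB.out hc hy ⟨hmid.1.le, by linarith [min_le_right d y]⟩) hmid

lemma subset_Ici_of_disjoint_Ioo (hB : B.OrdConnected) (hd : d ∈ B) (hcd : c < d)
    (hdisj : Disjoint B (Ioo c d)) : B ⊆ Ici d := by
  intro y hy
  rw [mem_Ici]
  by_contra! hyd
  have hmid : (max c y + d) / 2 ∈ Ioo c d :=
    ⟨by linarith [le_max_left c y, max_lt hcd hyd], by linarith [max_lt hcd hyd]⟩
  exact disjoint_left.mp hdisj (hB.out hy hd ⟨by linarith [le_max_right c y], hmid.2.le⟩) hmid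

lemma Ioc_sub_diam_subset (hB : B.OrdConnected) (hbdd : IsBounded B) (hc : c ∈ B) (hcd : c < d)
    (hdisj : Disjoint B (Ioo c d)) : Ioc (c - diam B) c ⊆ B := by
  have hsup : sSup B = c := IsGreatest.csSup_eq ⟨hc, hB.subset_Iic_of_disjoint_Ioo hc hcd hdisj⟩
  rintro p ⟨hp, hpc⟩
  rw [Real.diam_eq hbdd, hsup, sub_sub_cancel] at hp
  obtain ⟨y, hy, hyp⟩ := (csInf_lt_iff hbdd.bddBelow ⟨c, hc⟩).mp hp
  exact hB.out hy hc ⟨hyp.le, hpc⟩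

lemma Ico_add_diam_subset (hB : B.OrdConnected) (hbdd : IsBounded B) (hd : d ∈ B) (hcd : c < d)
    (hdisj : Disjoint B (Ioo c d)) : Ico d (d + diam B) ⊆ B := by
  have hinf : sInf B = d := IsLeast.csInf_eq ⟨hd, hB.subset_Ici_of_disjoint_Ioo hd hcd hdisj⟩
  rintro p ⟨hdp, hp⟩
  rw [Real.diam_eq hbdd, hinf, add_sub_cancel] at hp
  obtain ⟨y, hy, hpy⟩ := (lt_csSup_iff hbdd.bddAbove ⟨d, hd⟩).mp hp
  exact hB.out hd hy ⟨hdp, hpy.le⟩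

end Set.OrdConnected

lemma connectedComponentIn_eq_Ioo {S : Set ℝ} {a b u : ℝ} (hS : Ioo a b ⊆ S) (ha : a ∉ S)
    (hb : b ∉ S) (hu : u ∈ Ioo a b) : connectedComponentIn S u = Ioo a b := by
  refine subset_antisymm (fun y hy => ?_) (isPreconnected_Ioo.subset_connectedComponentIn hu hS)
  have hC := (isPreconnected_connectedComponentIn (F := S) (x := u)).ordConnected
  have huC : u ∈ connectedComponentIn S u := mem_connectedComponentIn (hS hu)
  have hCS := connectedComponentIn_subset S u
  constructor
  · by_contra! hya
    exact ha (hCS (hC.out hy huC ⟨hya, hu.1.le⟩))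
  · by_contra! hby
    exact hb (hCS (hC.out huC hy ⟨hu.2.le, hby⟩))

section Gaps

variable {K : Set ℝ}

lemma mem_cantorHull (hK : IsCompact K) {x : ℝ} (hx : x ∈ K) : x ∈ cantorHull K :=
  ⟨csInf_le hK.bddBelow hx, le_csSup hK.bddAbove hx⟩

lemma Ioo_subset_cantorHull_diff (hK : IsCompact K) {a b : ℝ} (ha : a ∈ K) (hb : b ∈ K)
    (hdisj : Disjoint (Ioo a b) K) : Ioo a b ⊆ cantorHull K \ K := fun _ hy =>
  ⟨ordConnected_Icc.out (mem_cantorHull hK ha) (mem_cantorHull hK hb) (Ioo_subset_Icc_self hy),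
    disjoint_left.mp hdisj hy⟩

lemma exists_Ioo_of_mem_cantorHull (hK : IsCompact K) (hne : K.Nonempty) {x : ℝ}
    (hx : x ∈ cantorHull K) (hxK : x ∉ K) :
    ∃ a b, a ∈ K ∧ b ∈ K ∧ x ∈ Ioo a b ∧ Disjoint (Ioo a b) K := by
  have hleft : IsCompact (K ∩ Iic x) := hK.inter_right isClosed_Iic
  have hright : IsCompact (K ∩ Ici x) := hK.inter_right isClosed_Ici
  obtain ⟨haK, hax⟩ := hleft.sSup_mem ⟨sInf K, hK.sInf_mem hne, hx.1⟩
  obtain ⟨hbK, hxb⟩ := hright.sInf_mem ⟨sSup K, hK.sSup_mem hne, hx.2⟩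
  refine ⟨sSup (K ∩ Iic x), sInf (K ∩ Ici x), haK, hbK,
    ⟨lt_of_le_of_ne hax (ne_of_mem_of_not_mem haK hxK),
      lt_of_le_of_ne hxb (ne_of_mem_of_not_mem hbK hxK).symm⟩, disjoint_left.mpr fun y hy hyK => ?_⟩
  rcases le_total y x with hyx | hxy
  · exact hy.1.not_ge (le_csSup hleft.bddAbove ⟨hyK, hyx⟩)
  · exact hy.2.not_ge (csInf_le hright.bddBelow ⟨hyK, hxy⟩)

lemma isGap_iff (hK : IsCompact K) (hne : K.Nonempty) {U : Set ℝ} :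
    IsGap K U ↔ ∃ a b, a ∈ K ∧ b ∈ K ∧ a < b ∧ Disjoint (Ioo a b) K ∧ U = Ioo a b := by
  constructor
  · rintro ⟨u, ⟨hu, huK⟩, rfl⟩
    obtain ⟨a, b, ha, hb, hab, hdisj⟩ := exists_Ioo_of_mem_cantorHull hK hne hu huK
    exact ⟨a, b, ha, hb, hab.1.trans hab.2, hdisj, connectedComponentIn_eq_Ioo
      (Ioo_subset_cantorHull_diff hK ha hb hdisj) (fun h => h.2 ha) (fun h => h.2 hb) hab⟩
  · rintro ⟨a, b, ha, hb, hab, hdisj, rfl⟩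
    have hmid : (a + b) / 2 ∈ Ioo a b := ⟨by linarith, by linarith⟩
    have hsub := Ioo_subset_cantorHull_diff hK ha hb hdisj
    exact ⟨_, hsub hmid,
      (connectedComponentIn_eq_Ioo hsub (fun h => h.2 ha) (fun h => h.2 hb) hmid).symm⟩

lemma IsGap.subset_cantorHull_diff {U : Set ℝ} (hU : IsGap K U) : U ⊆ cantorHull K \ K := by
  obtain ⟨u, -, rfl⟩ := hU
  exact connectedComponentIn_subset _ _

namespace IsPresentation

variable {𝒰 : ℕ → Set ℝ} (hP : IsPresentation K 𝒰)
include hP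

lemma isGap (n : ℕ) : IsGap K (𝒰 n) :=
  hP.2.subset (mem_range_self n)

lemma exists_mem {x : ℝ} (hx : x ∈ cantorHull K) (hxK : x ∉ K) : ∃ n, x ∈ 𝒰 n := by
  have hgap : IsGap K (connectedComponentIn (cantorHull K \ K) x) := ⟨x, ⟨hx, hxK⟩, rfl⟩
  obtain ⟨n, hn⟩ : _ ∈ range 𝒰 := hP.2.superset hgap
  exact ⟨n, hn ▸ mem_connectedComponentIn ⟨hx, hxK⟩⟩

lemma pairwise_disjoint : Pairwise (Disjoint on 𝒰) := by
  intro n m hnm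
  refine disjoint_left.mpr fun x hxn hxm => hnm (hP.1 ?_)
  obtain ⟨u, -, hu⟩ := hP.isGap n
  obtain ⟨v, -, hv⟩ := hP.isGap m
  have hxu : x ∈ connectedComponentIn (cantorHull K \ K) u := hu ▸ hxn
  have hxv : x ∈ connectedComponentIn (cantorHull K \ K) v := hv ▸ hxm
  rw [hu, hv, connectedComponentIn_eq hxu, connectedComponentIn_eq hxv]

lemma eq_Ioo (hK : IsCompact K) (hne : K.Nonempty) (n : ℕ) :
    ∃ a b, a ∈ K ∧ b ∈ K ∧ a < b ∧ Disjoint (Ioo a b) K ∧ 𝒰 n = Ioo a b :=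
  (isGap_iff hK hne).mp (hP.isGap n)

lemma finite_setOf_le_volume (hK : IsCompact K) (hne : K.Nonempty) {ε : ENNReal} (hε : 0 < ε) :
    {n | ε ≤ volume (𝒰 n)}.Finite := by
  refine Measure.finite_const_le_meas_of_disjoint_iUnion volume hε (fun n => ?_)
    hP.pairwise_disjoint (ne_top_of_le_ne_top (measure_Icc_lt_top (a := sInf K) (b := sSup K)).ne
      (measure_mono ?_))
  · obtain ⟨a, b, -, -, -, -, hn⟩ := hP.eq_Ioo hK hne n
    exact hn ▸ measurableSet_Ioo
  · exact iUnion_subset fun n => ((hP.isGap n).subset_cantorHull_diff).trans sdiff_subset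

end IsPresentation

end Gaps

section Bridges

variable {K : Set ℝ} {𝒰 : ℕ → Set ℝ} {n : ℕ} {u c d : ℝ}

lemma bridge_subset : bridge K 𝒰 n u ⊆ cantorHull K \ ⋃ i ∈ Finset.range (n + 1), 𝒰 i :=
  connectedComponentIn_subset _ _

lemma ordConnected_bridge : (bridge K 𝒰 n u).OrdConnected :=
  isPreconnected_connectedComponentIn.ordConnected

lemma isBounded_bridge : IsBounded (bridge K 𝒰 n u) :=
  (isBounded_Icc (sInf K) (sSup K)).subset fun _ hx => (bridge_subset hx).1

lemma disjoint_bridge : Disjoint (bridge K 𝒰 n u) (𝒰 n) :=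
  disjoint_left.mpr fun _ hx hxn =>
    (bridge_subset hx).2 (mem_biUnion (Finset.self_mem_range_succ n) hxn)

namespace IsPresentation

variable (hP : IsPresentation K 𝒰)
include hP

lemma mem_bridge (hK : IsCompact K) (hu : u ∈ K) : u ∈ bridge K 𝒰 n u := by
  refine mem_connectedComponentIn ⟨mem_cantorHull hK hu, ?_⟩
  simp only [mem_iUnion, not_exists]
  exact fun i _ hui => ((hP.isGap i).subset_cantorHull_diff hui).2 hu

lemma exists_lt_mem_of_mem_bridge {x : ℝ} (hx : x ∈ bridge K 𝒰 n u) (hxK : x ∉ K) :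
    ∃ m, n < m ∧ x ∈ 𝒰 m := by
  obtain ⟨m, hm⟩ := hP.exists_mem (bridge_subset hx).1 hxK
  refine ⟨m, lt_of_not_ge fun hmn => (bridge_subset hx).2 ?_, hm⟩
  exact mem_biUnion (Finset.mem_range_succ_iff.mpr hmn) hm

lemma Ioc_subset_bridge (hK : IsCompact K) (hn : 𝒰 n = Ioo c d) (hcd : c < d) (hc : c ∈ K) :
    Ioc (c - diam (bridge K 𝒰 n c)) c ⊆ bridge K 𝒰 n c :=
  ordConnected_bridge.Ioc_sub_diam_subset isBounded_bridge (hP.mem_bridge hK hc) hcd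
    (hn ▸ disjoint_bridge)

lemma Ico_subset_bridge (hK : IsCompact K) (hn : 𝒰 n = Ioo c d) (hcd : c < d) (hd : d ∈ K) :
    Ico d (d + diam (bridge K 𝒰 n d)) ⊆ bridge K 𝒰 n d :=
  ordConnected_bridge.Ico_add_diam_subset isBounded_bridge (hP.mem_bridge hK hd) hcd
    (hn ▸ disjoint_bridge)

end IsPresentation

end Bridges

section Thickness

variable {K L : Set ℝ}

structure IsThickPresentation (K : Set ℝ) (𝒰 : ℕ → Set ℝ) (τ : ℝ) : Prop where
  isPresentation : IsPresentation K 𝒰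
  mul_diam_le : ∀ n, ∀ u ∈ frontier (𝒰 n), τ * diam (𝒰 n) ≤ diam (bridge K 𝒰 n u)

lemma IsThickPresentation.mul_sub_le {𝒰 : ℕ → Set ℝ} {τ : ℝ} (h : IsThickPresentation K 𝒰 τ)
    {n : ℕ} {a b u : ℝ} (hn : 𝒰 n = Ioo a b) (hab : a < b) (hu : u = a ∨ u = b) :
    τ * (b - a) ≤ diam (bridge K 𝒰 n u) := by
  have := h.mul_diam_le n u (by rw [hn, frontier_Ioo hab]; exact hu)
  rwa [hn, Real.diam_Ioo hab.le] at this

lemma thickness_nonneg (K : Set ℝ) : 0 ≤ thickness K :=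
  Real.iSup_nonneg fun _ => Real.iInf_nonneg fun _ => div_nonneg diam_nonneg diam_nonneg

lemma exists_isThickPresentation_of_lt_thickness {r : ℝ} (hr : 0 ≤ r) (h : r < thickness K) :
    ∃ 𝒰 τ, r < τ ∧ IsThickPresentation K 𝒰 τ := by
  cases isEmpty_or_nonempty {𝒰 : ℕ → Set ℝ // IsPresentation K 𝒰} with
  | inl hempty =>
    rw [thickness, Real.iSup_of_isEmpty] at h
    exact absurd hr h.not_ge
  | inr _ =>
    obtain ⟨⟨𝒰, h𝒰⟩, hlt⟩ := exists_lt_of_lt_ciSup h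
    refine ⟨𝒰, _, hlt, h𝒰, fun n u hu => ?_⟩
    have hle : (⨅ p : {p : ℕ × ℝ // p.2 ∈ frontier (𝒰 p.1)},
        diam (bridge K 𝒰 p.1.1 p.1.2) / diam (𝒰 p.1.1)) ≤ diam (bridge K 𝒰 n u) / diam (𝒰 n) := by
      refine ciInf_le ⟨0, ?_⟩ (⟨(n, u), hu⟩ : {p : ℕ × ℝ // p.2 ∈ frontier (𝒰 p.1)})
      rintro _ ⟨p, rfl⟩
      exact div_nonneg diam_nonneg diam_nonneg
    rcases (diam_nonneg (s := 𝒰 n)).eq_or_lt with hzero | hpos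
    · rw [← hzero, mul_zero]
      exact diam_nonneg
    · exact (le_div_iff₀ hpos).mp hle

lemma exists_isThickPresentation_of_one_lt_mul (h : 1 < thickness K * thickness L) :
    ∃ 𝒰 𝒱 s t, IsThickPresentation K 𝒰 s ∧ IsThickPresentation L 𝒱 t ∧
      0 ≤ s ∧ 0 ≤ t ∧ 1 < s * t := by
  have hL : 0 < thickness L := pos_of_mul_pos_right (one_pos.trans h) (thickness_nonneg K)
  obtain ⟨𝒰, s, hs, h𝒰⟩ := exists_isThickPresentation_of_lt_thickness (inv_nonneg.mpr hL.le)
    ((inv_lt_iff_one_lt_mul₀ hL).mpr h)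
  have hs0 : 0 < s := (inv_pos.mpr hL).trans hs
  obtain ⟨𝒱, t, ht, h𝒱⟩ := exists_isThickPresentation_of_lt_thickness (inv_nonneg.mpr hs0.le)
    ((inv_lt_iff_one_lt_mul₀ hs0).mpr (mul_comm s _ ▸ (inv_lt_iff_one_lt_mul₀ hL).mp hs))
  exact ⟨𝒰, 𝒱, s, t, h𝒰, h𝒱, hs0.le, ((inv_pos.mpr hs0).trans ht).le,
    mul_comm t s ▸ (inv_lt_iff_one_lt_mul₀ hs0).mp ht⟩

end Thickness

section Linked

variable {K L : Set ℝ} {𝒰 𝒱 : ℕ → Set ℝ}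

def LinkedGaps (K L : Set ℝ) (𝒰 𝒱 : ℕ → Set ℝ) (n m : ℕ) : Prop :=
  ∃ a b c d, a ∈ K ∧ b ∈ K ∧ c ∈ L ∧ d ∈ L ∧ 𝒰 n = Ioo a b ∧ 𝒱 m = Ioo c d ∧
    a < c ∧ c < b ∧ b < d

def IsLinkedPair (K L : Set ℝ) (𝒰 𝒱 : ℕ → Set ℝ) (p : ℕ × ℕ) : Prop :=
  LinkedGaps K L 𝒰 𝒱 p.1 p.2 ∨ LinkedGaps L K 𝒱 𝒰 p.2 p.1

lemma LinkedGaps.le_volume {ε : ENNReal} (hsep : ∀ x ∈ K, ∀ y ∈ L, ε < edist x y) {n m : ℕ}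
    (h : LinkedGaps K L 𝒰 𝒱 n m) : ε ≤ volume (𝒰 n) ∧ ε ≤ volume (𝒱 m) := by
  obtain ⟨a, b, c, d, ha, hb, hc, hd, hn, hm, hac, hcb, hbd⟩ := h
  have hsep' : ∀ x ∈ K, ∀ y ∈ L, x < y → ε ≤ ENNReal.ofReal (y - x) := fun x hx y hy hxy => by
    have := (hsep x hx y hy).le
    rwa [edist_dist, Real.dist_eq, abs_sub_comm, abs_of_pos (sub_pos.mpr hxy)] at this
  rw [hn, hm, Real.volume_Ioo, Real.volume_Ioo]
  exact ⟨(hsep' a ha c hc hac).trans (ENNReal.ofReal_le_ofReal (by linarith)),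
    (hsep' b hb d hd hbd).trans (ENNReal.ofReal_le_ofReal (by linarith))⟩

variable {s t : ℝ} (hK : IsCompact K) (hL : IsCompact L) (hKL : Disjoint K L)
  (h𝒰 : IsThickPresentation K 𝒰 s) (h𝒱 : IsThickPresentation L 𝒱 t)
  (hst : 1 < s * t)
include hK hL hKL h𝒰 h𝒱 hst

lemma LinkedGaps.exists_next (ht : 0 ≤ t) {n m : ℕ} (h : LinkedGaps K L 𝒰 𝒱 n m) :
    (∃ m' > m, LinkedGaps L K 𝒱 𝒰 m' n) ∨ ∃ n' > n, LinkedGaps L K 𝒱 𝒰 m n' := by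
  obtain ⟨a, b, c, d, ha, hb, hc, hd, hn, hm, hac, hcb, hbd⟩ := h
  have hKb := h𝒰.mul_sub_le hn (hac.trans hcb) (Or.inr rfl)
  have hLc := h𝒱.mul_sub_le hm (hcb.trans hbd) (Or.inl rfl)
  -- otherwise `s * t * (b - a) ≤ t * (d - c) ≤ b - a`
  have hlong : b - a < diam (bridge L 𝒱 m c) ∨ d - c < diam (bridge K 𝒰 n b) := by
    by_contra! hshort
    nlinarith [mul_le_mul_of_nonneg_left (hKb.trans hshort.2) ht,
      mul_lt_mul_of_pos_right hst (sub_pos.mpr (hac.trans hcb))]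
  rcases hlong with hlong | hlong
  · have haB : a ∈ bridge L 𝒱 m c :=
      h𝒱.isPresentation.Ioc_subset_bridge hL hm (hcb.trans hbd) hc ⟨by linarith, hac.le⟩
    obtain ⟨m', hmm', ham'⟩ :=
      h𝒱.isPresentation.exists_lt_mem_of_mem_bridge haB (hKL.notMem_of_mem_left ha)
    obtain ⟨c', d', hc', hd', -, hgap, hm'⟩ := h𝒱.isPresentation.eq_Ioo hL ⟨c, hc⟩ m'
    rw [hm'] at ham'
    have hd'c : d' ≤ c := le_of_not_gt fun hcd' => disjoint_left.mp hgap ⟨ham'.1.trans hac, hcd'⟩ hc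
    exact Or.inl ⟨m', hmm', c', d', a, b, hc', hd', ha, hb, hm', hn, ham'.1, ham'.2,
      hd'c.trans_lt hcb⟩
  · have hdB : d ∈ bridge K 𝒰 n b :=
      h𝒰.isPresentation.Ico_subset_bridge hK hn (hac.trans hcb) hb ⟨hbd.le, by linarith⟩
    obtain ⟨n', hnn', hdn'⟩ :=
      h𝒰.isPresentation.exists_lt_mem_of_mem_bridge hdB (hKL.notMem_of_mem_right hd)
    obtain ⟨a', b', ha', hb', -, hgap, hn'⟩ := h𝒰.isPresentation.eq_Ioo hK ⟨b, hb⟩ n'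
    rw [hn'] at hdn'
    have hba' : b ≤ a' := le_of_not_gt fun hab' => disjoint_left.mp hgap ⟨hab', hbd.trans hdn'.2⟩ hb
    exact Or.inr ⟨n', hnn', c, d, a', b', hc, hd, ha', hb', hm, hn', hcb.trans_le hba', hdn'.1,
      hdn'.2⟩

lemma IsLinkedPair.exists_next (hs : 0 ≤ s) (ht : 0 ≤ t) {p : ℕ × ℕ} (h : IsLinkedPair K L 𝒰 𝒱 p) :
    ∃ q, IsLinkedPair K L 𝒰 𝒱 q ∧ p.1 + p.2 < q.1 + q.2 := by
  rcases h with h | h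
  · rcases h.exists_next hK hL hKL h𝒰 h𝒱 hst ht with ⟨m', hm', h'⟩ | ⟨n', hn', h'⟩
    · exact ⟨(p.1, m'), Or.inr h', by simp only; omega⟩
    · exact ⟨(n', p.2), Or.inr h', by simp only; omega⟩
  · rcases h.exists_next hL hK hKL.symm h𝒱 h𝒰 (mul_comm s t ▸ hst) hs with
      ⟨n', hn', h'⟩ | ⟨m', hm', h'⟩
    · exact ⟨(n', p.2), Or.inl h', by simp only; omega⟩
    · exact ⟨(p.1, m'), Or.inl h', by simp only; omega⟩

end Linked

section Interleaved

variable {K L : Set ℝ} (hK : IsCompact K) (hKne : K.Nonempty) (hL : IsCompact L)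
  (hLne : L.Nonempty) (hint : Interleaved K L)
include hK hKne hL hLne hint

lemma Interleaved.exists_mem_cantorHull : ∃ x ∈ K, x ∈ cantorHull L := by
  obtain ⟨-, hLgap, hKleft, hKright, -, -⟩ := hint
  by_contra! hout
  have hout' : ∀ x ∈ K, x < sInf L ∨ sSup L < x := fun x hx => by
    simpa only [cantorHull, mem_Icc, not_and_or, not_le] using hout x hx
  obtain ⟨x₀, hx₀, hx₀L⟩ := not_subset.mp hKright
  obtain ⟨x₁, hx₁, hx₁L⟩ := not_subset.mp hKleft
  simp only [mem_ofPred_eq, not_lt] at hx₀L hx₁L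
  have hInfL : sInf L ≤ sSup L := csInf_le_csSup hLne hL.bddBelow hL.bddAbove
  have hx₀' : x₀ < sInf L := (hout' x₀ hx₀).resolve_right hx₀L.not_gt
  have hx₁' : sSup L < x₁ := (hout' x₁ hx₁).resolve_left hx₁L.not_gt
  obtain ⟨a, b, ha, hb, hab, hgap⟩ := exists_Ioo_of_mem_cantorHull hK hKne
    ⟨(mem_cantorHull hK hx₀).1.trans hx₀'.le, hx₁L.trans (mem_cantorHull hK hx₁).2⟩
    fun h => (hout' _ h).elim (lt_irrefl _) (hInfL.not_gt ·)
  have hbL : sSup L < b := (hout' b hb).resolve_left fun h => hab.2.not_gt h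
  exact hLgap ⟨Ioo a b, (isGap_iff hK hKne).mpr ⟨a, b, ha, hb, hab.1.trans hab.2, hgap, rfl⟩,
    fun y hy => ⟨hab.1.trans_le (csInf_le hL.bddBelow hy), (le_csSup hL.bddAbove hy).trans_lt hbL⟩⟩

lemma Interleaved.exists_isLinkedPair (hKL : Disjoint K L) {𝒰 𝒱 : ℕ → Set ℝ}
    (h𝒰 : IsPresentation K 𝒰) (h𝒱 : IsPresentation L 𝒱) : ∃ p, IsLinkedPair K L 𝒰 𝒱 p := by
  obtain ⟨x, hxK, hxL⟩ := hint.exists_mem_cantorHull hK hKne hL hLne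
  obtain ⟨m, hm⟩ := h𝒱.exists_mem hxL (hKL.notMem_of_mem_left hxK)
  obtain ⟨c, d, hc, hd, -, hgapL, hmeq⟩ := h𝒱.eq_Ioo hL hLne m
  rw [hmeq] at hm
  have hK_notin : ¬ (c < sInf K ∧ sSup K < d) := fun ⟨hc', hd'⟩ => hint.1
    ⟨Ioo c d, hmeq ▸ h𝒱.isGap m, fun y hy =>
      ⟨hc'.trans_le (csInf_le hK.bddBelow hy), (le_csSup hK.bddAbove hy).trans_lt hd'⟩⟩
  rcases not_and_or.mp hK_notin with hc' | hd'
  · obtain ⟨n, hn⟩ := h𝒰.exists_mem ⟨not_lt.mp hc', hm.1.le.trans (mem_cantorHull hK hxK).2⟩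
      (hKL.notMem_of_mem_right hc)
    obtain ⟨a, b, ha, hb, -, hgapK, hneq⟩ := h𝒰.eq_Ioo hK hKne n
    rw [hneq] at hn
    have hbx : b ≤ x := le_of_not_gt fun hxb => disjoint_left.mp hgapK ⟨hn.1.trans hm.1, hxb⟩ hxK
    exact ⟨(n, m), Or.inl ⟨a, b, c, d, ha, hb, hc, hd, hneq, hmeq, hn.1, hn.2, hbx.trans_lt hm.2⟩⟩
  · obtain ⟨n, hn⟩ := h𝒰.exists_mem ⟨(mem_cantorHull hK hxK).1.trans hm.2.le, not_lt.mp hd'⟩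
      (hKL.notMem_of_mem_right hd)
    obtain ⟨a, b, ha, hb, -, hgapK, hneq⟩ := h𝒰.eq_Ioo hK hKne n
    rw [hneq] at hn
    have hxa : x ≤ a := le_of_not_gt fun hax => disjoint_left.mp hgapK ⟨hax, hm.2.trans hn.2⟩ hxK
    exact ⟨(n, m), Or.inr ⟨c, d, a, b, hc, hd, ha, hb, hmeq, hneq, hm.1.trans_le hxa, hn.1, hn.2⟩⟩

end Interleaved

/-- Newhouse gap lemma: if `τ(K₁)·τ(K₂) > 1` and `K₁, K₂` are interleaved
Cantor sets, then `K₁ ∩ K₂ ≠ ∅`. -/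
theorem gap_lemma (K₁ K₂ : Set ℝ) (h₁ : IsCantorSet K₁) (h₂ : IsCantorSet K₂)
    (hτ : 1 < thickness K₁ * thickness K₂) (hint : Interleaved K₁ K₂) :
    (K₁ ∩ K₂).Nonempty := by
  obtain ⟨hK₁, -, -, hne₁⟩ := h₁
  obtain ⟨hK₂, -, -, hne₂⟩ := h₂
  by_contra hempty
  have hdisj : Disjoint K₁ K₂ := disjoint_iff_inter_eq_empty.mpr (not_nonempty_iff_eq_empty.mp hempty)
  obtain ⟨𝒰, 𝒱, s, t, h𝒰, h𝒱, hs, ht, hst⟩ := exists_isThickPresentation_of_one_lt_mul hτ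
  obtain ⟨ε, hε, hsep⟩ := Metric.exists_pos_forall_lt_edist hK₁ hK₂.isClosed hdisj
  -- linked gaps are longer than `ε`, and only finitely many gaps are that long
  have hfin : {p | IsLinkedPair K₁ K₂ 𝒰 𝒱 p}.Finite := by
    refine ((h𝒰.isPresentation.finite_setOf_le_volume hK₁ hne₁ (ENNReal.coe_pos.mpr hε)).prod
      (h𝒱.isPresentation.finite_setOf_le_volume hK₂ hne₂ (ENNReal.coe_pos.mpr hε))).subset ?_
    rintro p (h | h)
    · exact h.le_volume hsep
    · exact (h.le_volume fun y hy x hx => edist_comm x y ▸ hsep x hx y hy).symm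
  obtain ⟨p, hp, hmax⟩ := exists_max_image _ (fun p : ℕ × ℕ => p.1 + p.2) hfin
    (hint.exists_isLinkedPair hK₁ hne₁ hK₂ hne₂ hdisj h𝒰.isPresentation h𝒱.isPresentation)
  obtain ⟨q, hq, hlt⟩ := hp.exists_next hK₁ hK₂ hdisj h𝒰 h𝒱 hst hs ht
  exact (hmax q hq).not_gt hlt
end

section
/- Let β > 1, 0 < δ < 1, and suppose |g'(x)| ≥ β for all x and |∂_y h| ≤ δ on the invariant set. Define h_N recursively by h_N(x,y) being the second coordinate of the N-th iterate of f(x,y) = (g(x), h(x,y)). If K := sup |∂_x h| and K' := K/(1 − δ/β), then |∂_x h_N(x,y)| ≤ K' · |(g^{N−1})'(x)| for all N ≥ 1 and all (x,y) in the invariant set. -/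
/-!
Write `P n = ∏_{i<n} |g'(gⁱ x)|`, so that `β P n ≤ P (n+1)`. The chain rule gives
`|∂ₓh_{n+1}| ≤ K P n + δ |∂ₓh_n|`, and `K' = K / (1 - δ/β)` is exactly the fixed point of
`c ↦ K + (δ/β) c`; hence `|∂ₓh_n| ≤ K' P (n-1)` propagates by induction, each step losing a
factor `δ` to the fiber contraction but gaining a factor `β` from the base expansion.
-/

open Finset

theorem add_div_mul_div_one_sub_div {K δ β : ℝ} (hβ : 0 < β) (hδβ : δ < β) :
    K + δ / β * (K / (1 - δ / β)) = K / (1 - δ / β) := by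
  have hβδ : β - δ ≠ 0 := (sub_pos.mpr hδβ).ne'
  rw [one_sub_div hβ.ne']
  field_simp
  ring

theorem le_div_one_sub_div_mul_of_le_add_mul {a p : ℕ → ℝ} {K δ β : ℝ}
    (hβ : 0 < β) (hδ : 0 ≤ δ) (hδβ : δ < β) (hK : 0 ≤ K)
    (hp0 : 0 ≤ p 0) (hp : ∀ n, β * p n ≤ p (n + 1))
    (ha0 : a 0 ≤ K * p 0) (ha : ∀ n, a (n + 1) ≤ K * p (n + 1) + δ * a n) :
    ∀ n, a n ≤ K / (1 - δ / β) * p n := by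
  set K' := K / (1 - δ / β)
  have hfix : K + δ / β * K' = K' := add_div_mul_div_one_sub_div hβ hδβ
  have hK' : 0 ≤ K' := div_nonneg hK (by rw [sub_nonneg, div_le_one hβ]; exact hδβ.le)
  have hKK' : K ≤ K' := by
    have : 0 ≤ δ / β * K' := by positivity
    linarith
  intro n
  induction n with
  | zero => exact ha0.trans (mul_le_mul_of_nonneg_right hKK' hp0)
  | succ n ih =>
    have hpn : p n ≤ p (n + 1) / β := by rw [le_div_iff₀ hβ, mul_comm]; exact hp n
    calc a (n + 1) ≤ K * p (n + 1) + δ * (K' * p n) := (ha n).trans (by gcongr)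
      _ ≤ K * p (n + 1) + δ * (K' * (p (n + 1) / β)) := by gcongr
      _ = (K + δ / β * K') * p (n + 1) := by ring
      _ = K' * p (n + 1) := by rw [hfix]

theorem partial_x_iterate_bound_general
    (Λ : Set (ℝ × ℝ)) (f : ℝ × ℝ → ℝ × ℝ) (gd : ℝ → ℝ) (hx hy : ℝ × ℝ → ℝ)
    (hinv : ∀ z ∈ Λ, f z ∈ Λ)
    (β δ K K' : ℝ) (hβ : 1 < β) (hδ1 : δ < 1)
    (hgd : ∀ z ∈ Λ, β ≤ |gd z.1|)
    (hhy : ∀ z ∈ Λ, |hy z| ≤ δ)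
    (hhx : ∀ z ∈ Λ, |hx z| ≤ K)
    (hK' : K' = K / (1 - δ / β))
    (A : ℕ → (ℝ × ℝ) → ℝ)
    (hA1 : ∀ z, A 1 z = hx z)
    (hAsucc : ∀ n, 1 ≤ n → ∀ z, A (n + 1) z =
      hx (f^[n] z) * (∏ i ∈ Finset.range n, gd ((f^[i] z).1)) + hy (f^[n] z) * A n z) :
    ∀ N, 1 ≤ N → ∀ z ∈ Λ,
      |A N z| ≤ K' * ∏ i ∈ Finset.range (N - 1), |gd ((f^[i] z).1)| := by
  intro N hN z hz
  obtain ⟨N, rfl⟩ : ∃ n, N = n + 1 := ⟨N - 1, by omega⟩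
  have horbit : ∀ n, f^[n] z ∈ Λ := fun n => Set.MapsTo.iterate hinv n hz
  set P : ℕ → ℝ := fun n => ∏ i ∈ range n, |gd ((f^[i] z).1)|
  have hP : ∀ n, β * P n ≤ P (n + 1) := fun n => by
    rw [show P (n + 1) = P n * |gd ((f^[n] z).1)| from prod_range_succ _ n, mul_comm]
    exact mul_le_mul_of_nonneg_left (hgd _ (horbit n)) (prod_nonneg fun _ _ => abs_nonneg _)
  have hA : ∀ n, |A (n + 2) z| ≤ K * P (n + 1) + δ * |A (n + 1) z| := fun n => by
    rw [hAsucc (n + 1) (by omega), show P (n + 1) = |∏ i ∈ range (n + 1), gd ((f^[i] z).1)|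
      from (abs_prod _ _).symm]
    refine (abs_add_le _ _).trans ?_
    rw [abs_mul, abs_mul]
    gcongr
    exacts [hhx _ (horbit _), hhy _ (horbit _)]
  rw [hK', Nat.add_sub_cancel]
  refine le_div_one_sub_div_mul_of_le_add_mul (a := fun n => |A (n + 1) z|) (by linarith)
    ((abs_nonneg _).trans (hhy z hz)) (by linarith) ((abs_nonneg _).trans (hhx z hz))
    (by simp [P]) hP (by simp [P, hA1, hhx z hz]) hA N

/-- for the skew product `f (x,y) = (g x, h (x,y))` with `|g'| ≥ β > 1` and
`|∂_y h| ≤ δ < 1` on the invariant set, the partial derivatives `A N = ∂_x h_N` of the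
fiber components of the iterates (satisfying the chain-rule recursion) obey
`|∂_x h_N (x,y)| ≤ K' · |(g^{N-1})'(x)|` with `K' = K/(1 - δ/β)`, `K = sup |∂_x h|`. -/
theorem partial_x_iterate_bound
    (Λ : Set (ℝ × ℝ)) (f : ℝ × ℝ → ℝ × ℝ) (g gd : ℝ → ℝ) (h hx hy : ℝ × ℝ → ℝ)
    (hf : ∀ z, f z = (g z.1, h z)) (hinv : ∀ z ∈ Λ, f z ∈ Λ)
    (β δ K K' : ℝ) (hβ : 1 < β) (hδ0 : 0 < δ) (hδ1 : δ < 1)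
    (hgd : ∀ z ∈ Λ, β ≤ |gd z.1|)
    (hhy : ∀ z ∈ Λ, |hy z| ≤ δ)
    (hhx : ∀ z ∈ Λ, |hx z| ≤ K)
    (hK' : K' = K / (1 - δ / β))
    (A : ℕ → (ℝ × ℝ) → ℝ)
    (hA1 : ∀ z, A 1 z = hx z)
    (hAsucc : ∀ n, 1 ≤ n → ∀ z, A (n + 1) z =
      hx (f^[n] z) * (∏ i ∈ Finset.range n, gd ((f^[i] z).1)) + hy (f^[n] z) * A n z) :
    ∀ N, 1 ≤ N → ∀ z ∈ Λ,
      |A N z| ≤ K' * ∏ i ∈ Finset.range (N - 1), |gd ((f^[i] z).1)| :=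
  partial_x_iterate_bound_general Λ f gd hx hy hinv β δ K K' hβ hδ1 hgd hhy hhx hK' A hA1 hAsucc
end

section
/- Under the assumptions that β > 1 is large enough that 1/β² · 1/(1 − δ/β) < 1.2/β² with δ < 1, suppose ω satisfies the series formula ω(ẑ) = (1/g'(x_{−1}))·∂_x h(z_{−1}) + Σ_{i=2}^∞ [∂_x h(z_{−i})·∂_y h(z_{−i+1})⋯∂_y h(z_{−1})] / [g'(x_{−1})⋯g'(x_{−i})] for every prehistory ẑ. If ẑ and ẑ' are two prehistories of the same point z with z_{−1} ≠ z_{−1}', ∂_x h(z_{−1}) = 1, ∂_x h(z_{−1}') = −1, β < g'(x) < β² for all relevant x, |∂_x h| ≤ 1 and |∂_y h| ≤ δ everywhere, then |ω(ẑ) − ω(ẑ')| > 0.7/β². -/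
/-- `zh = (z, z₋₁, z₋₂, …)` is a prehistory in `Λ`: a sequence of consecutive
`f`-preimages all lying in `Λ`. -/
def IsPrehistory (Λ : Set (ℝ × ℝ)) (f : ℝ × ℝ → ℝ × ℝ) (zh : ℕ → ℝ × ℝ) : Prop :=
  (∀ n, zh n ∈ Λ) ∧ ∀ n, f (zh (n + 1)) = zh n

/-- The shift `f̂` on prehistories: `f̂ (z, z₋₁, …) = (f z, z, z₋₁, …)`. -/
def shiftPre (f : ℝ × ℝ → ℝ × ℝ) (zh : ℕ → ℝ × ℝ) : ℕ → ℝ × ℝ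
  | 0 => f (zh 0)
  | n + 1 => zh n

/-!
Along a prehistory the `i`-th term of the slope series is at most `(δ/β)^i / g'(x₋₁)` in absolute
value, so `ω(ẑ)` equals its leading term `∂ₓh(z₋₁)/g'(x₋₁) = ±1/g'(x₋₁)` up to an error of
`(δ/β)/(1 - δ/β) < 0.2` times `1/g'(x₋₁)`. Hence `ω(ẑ) > 0.8/β²` and `ω(ẑ') < -0.8/β²`.
-/

open Finset

theorem norm_tsum_sub_zero_le {E : Type*} [NormedAddCommGroup E] [CompleteSpace E]
    {a : ℕ → E} {C r : ℝ} (hr0 : 0 ≤ r) (hr1 : r < 1) (ha : ∀ i, ‖a i‖ ≤ C * r ^ i) :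
    ‖∑' i, a i - a 0‖ ≤ C * (r / (1 - r)) := by
  have hsum : Summable a := .of_norm_bounded ((summable_geometric_of_lt_one hr0 hr1).mul_left C) ha
  rw [hsum.tsum_eq_zero_add, add_sub_cancel_left, ← mul_div_assoc, div_eq_mul_inv]
  refine tsum_of_norm_bounded ((hasSum_geometric_of_lt_one hr0 hr1).mul_left (C * r)) fun i ↦ ?_
  rw [mul_assoc, ← pow_succ']
  exact ha (i + 1)

/-- With `uᵢ = ∂ₓh(z₋ᵢ₋₁)`, `vⱼ = ∂_y h(z₋ⱼ₋₁)` and `wⱼ = g'(x₋ⱼ₋₁)` this is the series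
for `ω(ẑ)`. -/
noncomputable def slopeSeries (u v w : ℕ → ℝ) : ℝ :=
  ∑' i, u i * (∏ j ∈ range i, v j) / ∏ j ∈ range (i + 1), w j

section SlopeSeries

variable {u v w : ℕ → ℝ} {β δ : ℝ}

theorem abs_slopeSeries_term_le (hβ : 0 < β) (hu : ∀ i, |u i| ≤ 1) (hv : ∀ i, |v i| ≤ δ)
    (hw : ∀ i, β ≤ w i) (i : ℕ) :
    |u i * (∏ j ∈ range i, v j) / ∏ j ∈ range (i + 1), w j| ≤ 1 / w 0 * (δ / β) ^ i := by
  have hδ : 0 ≤ δ := (abs_nonneg _).trans (hv 0)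
  have hw0 : 0 < w 0 := hβ.trans_le (hw 0)
  have hnum : |u i * ∏ j ∈ range i, v j| ≤ δ ^ i := by
    rw [abs_mul, abs_prod]
    calc |u i| * ∏ j ∈ range i, |v j| ≤ 1 * ∏ _j ∈ range i, δ := by
          gcongr with j
          · exact hu i
          · exact hv j
      _ = δ ^ i := by rw [one_mul, prod_const, card_range]
  have hden : β ^ i * w 0 ≤ ∏ j ∈ range (i + 1), w j := by
    rw [prod_range_succ']
    refine mul_le_mul_of_nonneg_right ?_ hw0.le
    calc β ^ i = ∏ _j ∈ range i, β := by rw [prod_const, card_range]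
      _ ≤ ∏ j ∈ range i, w (j + 1) := prod_le_prod (fun _ _ ↦ hβ.le) fun j _ ↦ hw (j + 1)
  calc |u i * (∏ j ∈ range i, v j) / ∏ j ∈ range (i + 1), w j|
      = |u i * ∏ j ∈ range i, v j| / ∏ j ∈ range (i + 1), w j := by
        rw [abs_div, abs_of_pos (hden.trans_lt' (by positivity))]
    _ ≤ δ ^ i / (β ^ i * w 0) := by gcongr
    _ = 1 / w 0 * (δ / β) ^ i := by rw [div_pow]; field_simp

theorem abs_slopeSeries_sub_le (hβ : 0 < β) (hδβ : δ < β)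
    (hu : ∀ i, |u i| ≤ 1) (hv : ∀ i, |v i| ≤ δ) (hw : ∀ i, β ≤ w i) :
    |slopeSeries u v w - u 0 / w 0| ≤ δ / β / (1 - δ / β) / w 0 := by
  have hr0 : 0 ≤ δ / β := div_nonneg ((abs_nonneg _).trans (hv 0)) hβ.le
  convert norm_tsum_sub_zero_le (E := ℝ) hr0 ((div_lt_one hβ).2 hδβ)
    (abs_slopeSeries_term_le hβ hu hv hw) using 2
  · simp [slopeSeries]
  · ring

theorem le_mul_slopeSeries (hβ : 0 < β) (hδβ : δ < β)
    (hu : ∀ i, |u i| ≤ 1) (hv : ∀ i, |v i| ≤ δ) (hw : ∀ i, β ≤ w i) (hu0 : |u 0| = 1) :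
    (1 - δ / β / (1 - δ / β)) / w 0 ≤ u 0 * slopeSeries u v w := by
  have hclose := abs_slopeSeries_sub_le hβ hδβ hu hv hw
  have hsq : u 0 * u 0 = 1 := by rw [← abs_mul_abs_self, hu0, one_mul]
  have hlow := neg_abs_le (u 0 * (slopeSeries u v w - u 0 / w 0))
  rw [abs_mul, hu0, one_mul, mul_sub, mul_div_assoc', hsq] at hlow
  rw [sub_div]
  linarith

end SlopeSeries

theorem unstable_slopes_differ_general
    (Λ : Set (ℝ × ℝ)) (gd : ℝ → ℝ) (hx hy : ℝ × ℝ → ℝ)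
    (f : ℝ × ℝ → ℝ × ℝ)
    (β δ : ℝ) (hβ : 1 < β) (hδ1 : δ < 1)
    (hβδ : 1 / β ^ 2 * (1 / (1 - δ / β)) < 1.2 / β ^ 2)
    (hgd : ∀ z ∈ Λ, β < gd z.1 ∧ gd z.1 < β ^ 2)
    (hhx : ∀ z ∈ Λ, |hx z| ≤ 1)
    (hhy : ∀ z ∈ Λ, |hy z| ≤ δ)
    (ω : (ℕ → ℝ × ℝ) → ℝ)
    (hseries : ∀ zh, IsPrehistory Λ f zh →
      ω zh = ∑' i : ℕ,
        hx (zh (i + 1)) * (∏ j ∈ Finset.range i, hy (zh (j + 1))) /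
          ∏ j ∈ Finset.range (i + 1), gd ((zh (j + 1)).1))
    (zh zh' : ℕ → ℝ × ℝ)
    (hzh : IsPrehistory Λ f zh) (hzh' : IsPrehistory Λ f zh')
    (hx1 : hx (zh 1) = 1) (hx1' : hx (zh' 1) = -1) :
    0.7 / β ^ 2 < |ω zh - ω zh'| := by
  have hβ0 : 0 < β := by linarith
  have hδβ : δ < β := by linarith
  have htail : δ / β / (1 - δ / β) < 0.2 := by
    have hr : 0 < 1 - δ / β := by rw [sub_pos, div_lt_one hβ0]; exact hδβ
    have : 1 / (1 - δ / β) < 1.2 := by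
      rw [div_eq_mul_one_div 1.2, mul_comm 1.2] at hβδ
      exact lt_of_mul_lt_mul_left hβδ (by positivity)
    rw [div_lt_iff₀ hr] at this ⊢
    linarith
  have hbound : ∀ z, IsPrehistory Λ f z → |hx (z 1)| = 1 → 0.8 / β ^ 2 < hx (z 1) * ω z := by
    intro z hz hz1
    rw [hseries z hz]
    calc 0.8 / β ^ 2 < (1 - δ / β / (1 - δ / β)) / β ^ 2 := by gcongr; linarith
      _ ≤ (1 - δ / β / (1 - δ / β)) / gd (z 1).1 := by
          gcongr
          · linarith
          · exact hβ0.trans (hgd _ (hz.1 1)).1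
          · exact (hgd _ (hz.1 1)).2.le
      _ ≤ _ := le_mul_slopeSeries (u := fun i ↦ hx (z (i + 1))) (v := fun j ↦ hy (z (j + 1)))
          (w := fun j ↦ gd (z (j + 1)).1) hβ0 hδβ (fun i ↦ hhx _ (hz.1 _))
          (fun j ↦ hhy _ (hz.1 _)) (fun j ↦ (hgd _ (hz.1 _)).1.le) hz1
  have h₁ := hbound zh hzh (by rw [hx1, abs_one])
  have h₂ := hbound zh' hzh' (by rw [hx1', abs_neg, abs_one])
  rw [hx1, one_mul] at h₁
  rw [hx1', neg_one_mul] at h₂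
  have : 0.7 / β ^ 2 < 0.8 / β ^ 2 + 0.8 / β ^ 2 := by
    rw [← add_div]; gcongr; norm_num
  linarith [le_abs_self (ω zh - ω zh')]

/-- assuming the series formula
`ω(ẑ) = ∂_x h(z₋₁)/g'(x₋₁) + Σ_{i≥2} ∂_x h(z₋ᵢ)·∂_y h(z₋ᵢ₊₁)⋯∂_y h(z₋₁)/(g'(x₋₁)⋯g'(x₋ᵢ))`,
if `ẑ, ẑ'` are prehistories of the same point with `z₋₁ ≠ z₋₁'`,
`∂_x h(z₋₁) = 1`, `∂_x h(z₋₁') = -1`, `β < g' < β²`, `|∂_x h| ≤ 1`, `|∂_y h| ≤ δ < 1`,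
and `(1/β²)·1/(1-δ/β) < 1.2/β²`, then `|ω(ẑ) - ω(ẑ')| > 0.7/β²`. -/
theorem unstable_slopes_differ
    (Λ : Set (ℝ × ℝ)) (g gd : ℝ → ℝ) (h hx hy : ℝ × ℝ → ℝ)
    (f : ℝ × ℝ → ℝ × ℝ) (hf : ∀ z, f z = (g z.1, h z))
    (β δ : ℝ) (hβ : 1 < β) (hδ0 : 0 ≤ δ) (hδ1 : δ < 1)
    (hβδ : 1 / β ^ 2 * (1 / (1 - δ / β)) < 1.2 / β ^ 2)
    (hgd : ∀ z ∈ Λ, β < gd z.1 ∧ gd z.1 < β ^ 2)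
    (hhx : ∀ z ∈ Λ, |hx z| ≤ 1)
    (hhy : ∀ z ∈ Λ, |hy z| ≤ δ)
    (ω : (ℕ → ℝ × ℝ) → ℝ)
    (hseries : ∀ zh, IsPrehistory Λ f zh →
      ω zh = ∑' i : ℕ,
        hx (zh (i + 1)) * (∏ j ∈ Finset.range i, hy (zh (j + 1))) /
          ∏ j ∈ Finset.range (i + 1), gd ((zh (j + 1)).1))
    (zh zh' : ℕ → ℝ × ℝ)
    (hzh : IsPrehistory Λ f zh) (hzh' : IsPrehistory Λ f zh')
    (hsame : zh 0 = zh' 0) (hdiff : zh 1 ≠ zh' 1)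
    (hx1 : hx (zh 1) = 1) (hx1' : hx (zh' 1) = -1) :
    0.7 / β ^ 2 < |ω zh - ω zh'| :=
  unstable_slopes_differ_general Λ gd hx hy f β δ hβ hδ1 hβδ hgd hhx hhy ω hseries zh zh' hzh hzh'
    hx1 hx1'
end
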